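/- Let u be a w-bubble. Suppose there are pairwise distinct indices i_1, …, i_N in {1, …, n} with w_{i_j} dividing w_{i_{j+1}} for every j ∈ {1, …, N−1}, and two further indices k, l ∈ {1, …, n} \ {i_1, …, i_N} (k ≠ l) such that w_{i_N} divides w_k + w_l. Then Σ_{j=1}^N w_{i_j} u_{i_j} + w_k u_k + w_l u_l < 2 d_w. -/

import Mathlib

/-- The weighted dot product `w · u = ∑ i, w i * u i`. -/
def dotW {n : ℕ} (w u : Fin n → ℕ) : ℕ := ∑ i, w i * u i

/-- `d_w`, the least common multiple of the weights. -/
def lcmW {n : ℕ} (w : Fin n → ℕ) : ℕ := Finset.univ.lcm w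

/-- `u` is a `w`-bubble: `w · u ≥ 2 d_w` and there is no `v ⪯ u` with `w · v = d_w`. -/
def IsBubble {n : ℕ} (w u : Fin n → ℕ) : Prop :=
  2 * lcmW w ≤ dotW w u ∧
    ¬ ∃ v : Fin n → ℕ, (∀ i, v i ≤ u i) ∧ dotW w v = lcmW w

/-!
If the sum were at least `2 d_w`, then `d_w` could be paid exactly by a sub-vector of `u`.
When `w_k u_k ≥ d_w` (or `w_l u_l ≥ d_w`) coins of a single kind suffice. Otherwise spend `x`
coins each of `k` and `l`, with `x` as large as `u_k`, `u_l` and `d_w / (w_k + w_l)` allow: the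
remainder `d_w - x (w_k + w_l)` is a multiple of `w_{i_N}` not exceeding the value of the chain,
and coins forming a divisibility chain pay such an amount greedily.
-/

open Finset Function

lemma Fin.dvd_of_le_of_forall_dvd_succ {N : ℕ} (b : Fin N → ℕ)
    (h : ∀ (j : ℕ) (hj : j + 1 < N), b ⟨j, Nat.lt_of_succ_lt hj⟩ ∣ b ⟨j + 1, hj⟩) {i j : Fin N}
    (hij : i ≤ j) : b i ∣ b j := by
  -- extending by `0` keeps the chain, as everything divides `0`
  let f : ℕ → ℕ := fun m => if hm : m < N then b ⟨m, hm⟩ else 0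
  have hf : ∀ m, f m ∣ f (m + 1) := by
    intro m
    by_cases hm : m + 1 < N
    · simpa [f, hm, show m < N by omega] using h m hm
    · simp [f, hm]
  simpa [f] using Nat.rel_of_forall_rel_succ_of_le (· ∣ ·) hf hij

lemma Finset.exists_le_sum_mul_eq_of_dvd_chain {ι : Type*} [LinearOrder ι] (s : Finset ι)
    (b c : ι → ℕ) (hchain : ∀ i ∈ s, ∀ j ∈ s, i ≤ j → b i ∣ b j) (T : ℕ)
    (hdvd : ∀ i ∈ s, b i ∣ T) (hle : T ≤ ∑ i ∈ s, b i * c i) :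
    ∃ f ≤ c, ∑ i ∈ s, b i * f i = T := by
  induction s using Finset.induction_on_max generalizing T with
  | empty => exact ⟨0, fun _ => Nat.zero_le _, by simp_all⟩
  | insert a s hlt ih =>
    have ha : a ∉ s := fun h => (hlt a h).false
    rw [sum_insert ha] at hle
    -- pay with as many coins of the largest value `b a` as possible
    set q := min (c a) (T / b a)
    have hrest : T - b a * q ≤ ∑ i ∈ s, b i * c i := by
      rcases min_choice (c a) (T / b a) with hq | hq <;> rw [show q = _ from hq]
      · omega
      · rw [Nat.mul_div_cancel' (hdvd a (mem_insert_self a s))]; omega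
    obtain ⟨f, hfc, hfT⟩ := ih (fun i hi j hj => hchain i (mem_insert_of_mem hi) j
      (mem_insert_of_mem hj)) (T - b a * q) (fun i hi => Nat.dvd_sub
        (hdvd i (mem_insert_of_mem hi))
        ((hchain i (mem_insert_of_mem hi) a (mem_insert_self a s) (hlt i hi).le).mul_right q))
      hrest
    refine ⟨update f a q, update_le_iff.2 ⟨min_le_left _ _, fun j _ => hfc j⟩, ?_⟩
    have hq : b a * q ≤ T := (Nat.mul_le_mul_left _ (min_le_right _ _)).trans (Nat.mul_div_le T _)
    rw [sum_insert ha, update_self, sum_congr rfl fun i hi => by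
      rw [update_of_ne (ne_of_mem_of_not_mem hi ha)], hfT]
    omega

lemma dotProduct_extend_zero {ι κ α : Type*} [Fintype ι] [Fintype κ]
    [NonUnitalNonAssocSemiring α] (w : κ → α) {e : ι → κ} (he : Injective e) (f : ι → α) :
    w ⬝ᵥ extend e f 0 = ∑ j, w (e j) * f j := by
  classical
  rw [dotProduct, ← sum_subset (subset_univ (univ.image e)), sum_image fun _ _ _ _ h => he h]
  · simp [he.extend_apply]
  · intro i _ hi
    rw [extend_apply' _ _ _ fun ⟨j, hj⟩ => hi (mem_image.2 ⟨j, mem_univ j, hj⟩)]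
    simp

lemma dotW_eq_dotProduct {n : ℕ} (w u : Fin n → ℕ) : dotW w u = w ⬝ᵥ u := rfl

lemma exists_le_dotW_eq_of_dvd_of_le_mul {n : ℕ} {w u : Fin n → ℕ} {T : ℕ} (i : Fin n)
    (hdvd : w i ∣ T) (hle : T ≤ w i * u i) : ∃ v ≤ u, dotW w v = T := by
  refine ⟨Pi.single i (T / w i), ?_, ?_⟩
  · intro j
    rcases eq_or_ne j i with rfl | hj
    · simpa using Nat.div_le_of_le_mul hle
    · simp [hj]
  · rw [dotW_eq_dotProduct, dotProduct_single, Nat.mul_div_cancel' hdvd]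

lemma exists_le_dotW_eq_of_dvd_chain {n m : ℕ} {w u : Fin n → ℕ} {e : Fin m → Fin n}
    (he : Injective e) (hchain : ∀ i j, i ≤ j → w (e i) ∣ w (e j)) {T : ℕ}
    (hdvd : ∀ j, w (e j) ∣ T) (hle : T ≤ ∑ j, w (e j) * u (e j)) :
    ∃ v ≤ u, (∀ i, i ∉ Set.range e → v i = 0) ∧ dotW w v = T := by
  obtain ⟨f, hfu, hfT⟩ := univ.exists_le_sum_mul_eq_of_dvd_chain (w ∘ e) (u ∘ e)
    (fun i _ j _ => hchain i j) T (fun j _ => hdvd j) hle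
  refine ⟨extend e f 0, fun i => ?_, fun i hi => extend_apply' _ _ _ fun ⟨j, hj⟩ => hi ⟨j, hj⟩,
    by rw [dotW_eq_dotProduct, dotProduct_extend_zero w he, ← hfT]; rfl⟩
  by_cases hi : ∃ j, e j = i
  · obtain ⟨j, rfl⟩ := hi
    simpa [he.extend_apply] using hfu j
  · simp [extend_apply' _ _ _ hi]

/- `x` counts the pairs of coins `a`, `b` spent, and coins of total value `C` must pay the rest.
When `x = T / (a + b)` the rest is below `a + b ≤ C`. -/
lemma Nat.exists_add_mul_le_le_add_mul_add {a b ua ub T C : ℕ} (ha : a ∣ T) (hb : b ∣ T)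
    (hua : a * ua < T) (hub : b * ub < T) (h : 2 * T ≤ C + a * ua + b * ub) :
    ∃ x ≤ ua, x ≤ ub ∧ (a + b) * x ≤ T ∧ T ≤ (a + b) * x + C := by
  have hua' : a * ua + a ≤ T := by
    have := Nat.le_of_dvd (by omega) (Nat.dvd_sub ha (dvd_mul_right a ua))
    omega
  have hub' : b * ub + b ≤ T := by
    have := Nat.le_of_dvd (by omega) (Nat.dvd_sub hb (dvd_mul_right b ub))
    omega
  set m := min ua ub
  by_cases hm : (a + b) * m ≤ T
  · refine ⟨m, min_le_left _ _, min_le_right _ _, hm, ?_⟩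
    rcases min_choice ua ub with h' | h' <;> rw [show m = _ from h', add_mul] <;> omega
  · have hTm : T / (a + b) < m := Nat.div_lt_of_lt_mul (not_le.1 hm)
    refine ⟨T / (a + b), (hTm.trans_le (min_le_left _ _)).le,
      (hTm.trans_le (min_le_right _ _)).le, Nat.mul_div_le T _, ?_⟩
    have hdiv := Nat.div_add_mod T (a + b)
    have hmod := Nat.mod_lt T (Nat.add_pos_left (Nat.pos_of_dvd_of_pos ha (by omega)) b)
    generalize T % (a + b) = r at hdiv hmod
    omega

lemma exists_le_dotW_eq_of_chain_pair {n N : ℕ} {w u : Fin n → ℕ} {e : Fin N → Fin n}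
    (he : Injective e) (hchain : ∀ i j, i ≤ j → w (e i) ∣ w (e j)) {k l : Fin n} (hkl : k ≠ l)
    (hk : ∀ j, e j ≠ k) (hl : ∀ j, e j ≠ l) (hsum : ∀ j, w (e j) ∣ w k + w l) {T : ℕ}
    (hTk : w k ∣ T) (hTl : w l ∣ T) (hTe : ∀ j, w (e j) ∣ T)
    (h2T : 2 * T ≤ ∑ j, w (e j) * u (e j) + w k * u k + w l * u l) :
    ∃ v ≤ u, dotW w v = T := by
  by_cases hTk' : T ≤ w k * u k
  · exact exists_le_dotW_eq_of_dvd_of_le_mul k hTk hTk'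
  by_cases hTl' : T ≤ w l * u l
  · exact exists_le_dotW_eq_of_dvd_of_le_mul l hTl hTl'
  push Not at hTk' hTl'
  obtain ⟨x, hxk, hxl, hxT, hTx⟩ := Nat.exists_add_mul_le_le_add_mul_add hTk hTl hTk' hTl' h2T
  obtain ⟨v, hvu, hv0, hvT⟩ := exists_le_dotW_eq_of_dvd_chain (u := u) he hchain
    (T := T - (w k + w l) * x)
    (fun j => Nat.dvd_sub (hTe j) ((hsum j).mul_right x)) (by omega)
  refine ⟨v + Pi.single k x + Pi.single l x, fun i => ?_, ?_⟩
  · rcases eq_or_ne i k with rfl | hik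
    · simpa [hv0 i fun ⟨j, hj⟩ => hk j hj, hkl] using hxk
    rcases eq_or_ne i l with rfl | hil
    · simpa [hv0 i fun ⟨j, hj⟩ => hl j hj, hkl.symm] using hxl
    · simpa [hik, hil] using hvu i
  · rw [dotW_eq_dotProduct, dotProduct_add, dotProduct_add, dotProduct_single, dotProduct_single,
      ← dotW_eq_dotProduct, hvT]
    rw [add_mul] at hxT ⊢
    omega

theorem bubble_chain_pair_sum_lt_two_lcm {n : ℕ} (w : Fin n → ℕ)
    (u : Fin n → ℕ) (hu : IsBubble w u)
    (N : ℕ) (hN : 0 < N) (e : Fin N → Fin n) (he : Function.Injective e)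
    (hdvd : ∀ (j : ℕ) (h : j + 1 < N), w (e ⟨j, by omega⟩) ∣ w (e ⟨j + 1, h⟩))
    (k l : Fin n) (hkl : k ≠ l) (hk : ∀ j, e j ≠ k) (hl : ∀ j, e j ≠ l)
    (hsum : w (e ⟨N - 1, by omega⟩) ∣ w k + w l) :
    ∑ j, w (e j) * u (e j) + w k * u k + w l * u l < 2 * lcmW w := by
  have hchain : ∀ i j, i ≤ j → w (e i) ∣ w (e j) := fun _ _ =>
    Fin.dvd_of_le_of_forall_dvd_succ (w ∘ e) hdvd
  have hdvd_top : ∀ j, w (e j) ∣ w (e ⟨N - 1, by omega⟩) :=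
    fun j => hchain j _ (Fin.mk_le_mk.2 (by omega))
  have hdvd_lcm : ∀ i, w i ∣ lcmW w := fun i => Finset.dvd_lcm (mem_univ i)
  by_contra! h
  obtain ⟨v, hvu, hv⟩ := exists_le_dotW_eq_of_chain_pair he hchain hkl hk hl
    (fun j => (hdvd_top j).trans hsum) (hdvd_lcm k) (hdvd_lcm l) (fun j => hdvd_lcm (e j)) h
  exact hu.2 ⟨v, hvu, hv⟩
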